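/- Let G be a connected simple graph containing six pairwise false twins t₁, …, t₆ that are not true twins and not simplicial. Then G has a geodetic set of size at most k if and only if G − t₁ has a geodetic set of size at most k. -/

import Mathlib

def simplicialVertex {V : Type*} (G : SimpleGraph V) (v : V) : Prop :=
  ∀ x ∈ G.neighborSet v, ∀ y ∈ G.neighborSet v, x ≠ y → G.Adj x y

def geodeticSet {V : Type*} (G : SimpleGraph V) (S : Set V) : Prop :=
  ∀ u : V, ∃ s₁ ∈ S, ∃ s₂ ∈ S, G.dist s₁ u + G.dist u s₂ = G.dist s₁ s₂

/-!
Exchanging two false twins is a graph automorphism, and deleting a false twin `a` that has another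
twin `b` preserves all remaining distances, since `G` retracts onto `G - a` by sending `a` to `b`.
If some twin `b ≠ a` is missing from a geodetic set, the swap of `a` and `b` moves the set off `a`
(in `G - a`, it shows instead that `a` is covered as `b` is). Otherwise the set contains at least
five twins, and replacing all of them by two non-adjacent common neighbours `x, y` of the twins and
two twins `b, c ≠ a` keeps it geodetic without making it larger: twins lie between `x` and `y`,
their neighbours between `b` and `c`, and a geodesic through a twin to a vertex at distance at
least 2 from all twins can be rerouted through `b`.
-/

open Finset

namespace SimpleGraph

variable {V W : Type*} {G : SimpleGraph V} {H : SimpleGraph W}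

theorem Hom.edist_map_le (f : G →g H) (u v : V) : H.edist (f u) (f v) ≤ G.edist u v := by
  by_cases huv : G.Reachable u v
  · obtain ⟨p, hp⟩ := huv.exists_walk_length_eq_edist
    calc H.edist (f u) (f v) ≤ (p.map f).length := edist_le _
      _ = G.edist u v := by rw [p.length_map, hp]
  · rw [edist_eq_top_of_not_reachable huv]
    exact le_top

theorem Iso.edist_map (e : G ≃g H) (u v : V) : H.edist (e u) (e v) = G.edist u v := by
  refine le_antisymm (e.toHom.edist_map_le u v) ?_
  simpa using e.symm.toHom.edist_map_le (e u) (e v)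

theorem Iso.dist_map (e : G ≃g H) (u v : V) : H.dist (e u) (e v) = G.dist u v :=
  congrArg ENat.toNat (e.edist_map u v)

theorem dist_eq_two_of_adj_of_adj {u v w : V} (huv : u ≠ v) (hnadj : ¬ G.Adj u v)
    (huw : G.Adj u w) (hwv : G.Adj w v) : G.dist u v = 2 := by
  rw [dist, edist_eq_two_iff.mpr ⟨huv, hnadj, w, huw, hwv.symm⟩]
  rfl

section Twins

variable {a b : V}

theorem not_adj_of_neighborSet_eq (h : G.neighborSet a = G.neighborSet b) : ¬ G.Adj a b := by
  intro hab
  have : b ∈ G.neighborSet b := h ▸ hab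
  exact G.loopless.irrefl b this

def twinSwap [DecidableEq V] (h : G.neighborSet a = G.neighborSet b) : G ≃g G where
  toEquiv := Equiv.swap a b
  map_rel_iff' {u v} := by
    have hab : ∀ z, G.Adj a z ↔ G.Adj b z := fun z => Set.ext_iff.mp h z
    simp only [Equiv.swap_apply_def]
    split_ifs <;> subst_vars <;> grind [SimpleGraph.adj_comm, SimpleGraph.irrefl]

theorem dist_eq_of_neighborSet_eq (h : G.neighborSet a = G.neighborSet b) {w : V}
    (hwa : w ≠ a) (hwb : w ≠ b) : G.dist a w = G.dist b w := by
  classical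
  have := (twinSwap h).dist_map a w
  rwa [twinSwap, RelIso.coe_fn_mk, Equiv.swap_apply_left,
    Equiv.swap_apply_of_ne_of_ne hwa hwb, eq_comm] at this

def retractDeleteTwin [DecidableEq V] (h : G.neighborSet a = G.neighborSet b) (hab : a ≠ b) :
    G →g G.induce {z | z ≠ a} where
  toFun v := if hv : v = a then ⟨b, hab.symm⟩ else ⟨v, hv⟩
  map_rel' {u v} huv := by
    have htw : ∀ z, G.Adj a z ↔ G.Adj b z := fun z => Set.ext_iff.mp h z
    split_ifs <;> subst_vars <;> grind [SimpleGraph.adj_comm, SimpleGraph.irrefl, comap_adj,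
      Function.Embedding.subtype_apply]

theorem edist_induce_eq_of_twin (h : G.neighborSet a = G.neighborSet b) (hab : a ≠ b)
    (u v : {z | z ≠ a}) : (G.induce {z | z ≠ a}).edist u v = G.edist u v := by
  classical
  refine le_antisymm ?_ ((Embedding.induce _).toHom.edist_map_le u v)
  have := (retractDeleteTwin h hab).edist_map_le u v
  have hu : retractDeleteTwin h hab u = u := dif_neg u.2
  have hv : retractDeleteTwin h hab v = v := dif_neg v.2
  rwa [hu, hv] at this

theorem dist_induce_eq_of_twin (h : G.neighborSet a = G.neighborSet b) (hab : a ≠ b)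
    (u v : {z | z ≠ a}) : (G.induce {z | z ≠ a}).dist u v = G.dist u v :=
  congrArg ENat.toNat (edist_induce_eq_of_twin h hab u v)

end Twins

/-- The geodetic closure, usually written `I[S]`. -/
def geodeticClosure (G : SimpleGraph V) (S : Set V) : Set V :=
  {u | ∃ s₁ ∈ S, ∃ s₂ ∈ S, G.dist s₁ u + G.dist u s₂ = G.dist s₁ s₂}

theorem Iso.map_mem_geodeticClosure (e : G ≃g H) {S : Set V} {u : V}
    (hu : u ∈ G.geodeticClosure S) : e u ∈ H.geodeticClosure (e '' S) := by
  obtain ⟨s₁, hs₁, s₂, hs₂, hsu⟩ := hu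
  exact ⟨e s₁, Set.mem_image_of_mem e hs₁, e s₂, Set.mem_image_of_mem e hs₂, by
    simpa only [e.dist_map] using hsu⟩

theorem Iso.geodeticSet_image (e : G ≃g H) {S : Set V} (hS : geodeticSet G S) :
    geodeticSet H (e '' S) := fun w => by
  have := e.map_mem_geodeticClosure (hS (e.symm w))
  rwa [e.apply_symm_apply] at this

theorem mem_geodeticClosure_of_twin {a b : V} (h : G.neighborSet a = G.neighborSet b)
    {S : Set V} (ha : a ∉ S) (hb : b ∉ S) (hbS : b ∈ G.geodeticClosure S) :
    a ∈ G.geodeticClosure S := by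
  classical
  have hfix : twinSwap h '' S = S := by
    refine Set.image_congr (fun s hs => ?_) |>.trans (Set.image_id S)
    exact Equiv.swap_apply_of_ne_of_ne (ne_of_mem_of_not_mem hs ha) (ne_of_mem_of_not_mem hs hb)
  have hba : twinSwap h b = a := Equiv.swap_apply_right a b
  have := (twinSwap h).map_mem_geodeticClosure hbS
  rwa [hfix, hba] at this

theorem mem_geodeticClosure_insert_sdiff_twins [DecidableEq V] (hG : G.Connected) {T : Finset V}
    (hT : ∀ v ∈ T, ∀ w ∈ T, G.neighborSet v = G.neighborSet w) {b c x y : V} (hb : b ∈ T)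
    (hc : c ∈ T) (hbc : b ≠ c) (hx : G.Adj b x) (hy : G.Adj b y) (hxy : x ≠ y)
    (hnxy : ¬ G.Adj x y) {S : Finset V} (hS : ∀ u ∉ T, u ∈ G.geodeticClosure S) (u : V) :
    u ∈ G.geodeticClosure ↑(insert x (insert y (insert b (insert c (S \ T))))) := by
  set C := insert x (insert y (insert b (insert c (S \ T))))
  have htw : ∀ v ∈ T, ∀ z, G.Adj v z ↔ G.Adj b z := fun v hv z => Set.ext_iff.mp (hT v hv b hb) z
  have hmem : ∀ s ∈ S, s ∉ T → s ∈ C := fun s hs hsT => by simp [C, hs, hsT]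
  have hbC : b ∈ C := by simp [C]
  by_cases huT : u ∈ T
  · refine ⟨x, by simp [C], y, by simp [C], ?_⟩
    rw [dist_eq_one_iff_adj.mpr ((htw u huT x).mpr hx).symm,
      dist_eq_one_iff_adj.mpr ((htw u huT y).mpr hy), dist_eq_two_of_adj_of_adj hxy hnxy hx.symm hy]
  by_cases hbu : G.Adj b u
  · have hcu : G.Adj c u := (htw c hc u).mpr hbu
    refine ⟨b, hbC, c, by simp [C], ?_⟩
    rw [dist_eq_one_iff_adj.mpr hbu, dist_eq_one_iff_adj.mpr hcu.symm,
      dist_eq_two_of_adj_of_adj hbc (not_adj_of_neighborSet_eq (hT b hb c hc)) hbu hcu.symm]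
  have hfar : ∀ v ∈ T, 2 ≤ G.dist v u := fun v hv =>
    hG.one_lt_dist_of_ne_of_not_adj (ne_of_mem_of_not_mem hv huT) (mt (htw v hv u).mp hbu)
  have hdist : ∀ v ∈ T, ∀ z ∉ T, G.dist v z = G.dist b z := fun v hv z hz =>
    dist_eq_of_neighborSet_eq (hT v hv b hb) (ne_of_mem_of_not_mem hv hz).symm
      (ne_of_mem_of_not_mem hb hz).symm
  obtain ⟨s₁, hs₁, s₂, hs₂, hsu⟩ := hS u huT
  by_cases h₁ : s₁ ∈ T <;> by_cases h₂ : s₂ ∈ T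
  · -- two twins are at distance at most 2, while both are at distance at least 2 from `u`
    have hs₁₂ : G.dist s₁ s₂ ≤ 2 := by
      rcases eq_or_ne s₁ s₂ with rfl | hne
      · simp
      · exact (dist_eq_two_of_adj_of_adj hne (not_adj_of_neighborSet_eq (hT _ h₁ _ h₂))
          ((htw _ h₁ x).mpr hx) ((htw _ h₂ x).mpr hx).symm).le
    have := hfar s₁ h₁
    have := hfar s₂ h₂
    rw [dist_comm (u := u)] at hsu
    omega
  · refine ⟨b, hbC, s₂, hmem s₂ hs₂ h₂, ?_⟩
    rwa [← hdist s₁ h₁ u huT, ← hdist s₁ h₁ s₂ h₂]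
  · refine ⟨s₁, hmem s₁ hs₁ h₁, b, hbC, ?_⟩
    rwa [dist_comm (v := b), dist_comm (v := b), ← hdist s₂ h₂ u huT, ← hdist s₂ h₂ s₁ h₁,
      dist_comm (u := s₂), dist_comm (u := s₂)]
  · exact ⟨s₁, hmem s₁ hs₁ h₁, s₂, hmem s₂ hs₂ h₂, hsu⟩

theorem exists_geodeticSet_card_le_of_erase_subset [DecidableEq V] (hG : G.Connected)
    {T : Finset V} (hT : ∀ v ∈ T, ∀ w ∈ T, G.neighborSet v = G.neighborSet w) (hT5 : 5 ≤ #T)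
    {a x y : V} (ha : a ∈ T) (hx : G.Adj a x) (hy : G.Adj a y) (hxy : x ≠ y)
    (hnxy : ¬ G.Adj x y) {S : Finset V} (hTS : T.erase a ⊆ S)
    (hS : ∀ u ∉ T, u ∈ G.geodeticClosure S) :
    ∃ C : Finset V, a ∉ C ∧ geodeticSet G C ∧ #C ≤ #S := by
  obtain ⟨b, hb, c, hc, hbc⟩ :=
    one_lt_card.mp (show 1 < #(T.erase a) by rw [card_erase_of_mem ha]; omega)
  have htw : ∀ z, G.Adj a z → G.Adj b z :=
    fun z => (Set.ext_iff.mp (hT a ha b (mem_of_mem_erase hb)) z).mp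
  refine ⟨insert x (insert y (insert b (insert c (S \ T)))), ?_,
    mem_geodeticClosure_insert_sdiff_twins hG hT (mem_of_mem_erase hb) (mem_of_mem_erase hc) hbc
      (htw x hx) (htw y hy) hxy hnxy hS, ?_⟩
  · simp [G.ne_of_adj hx, G.ne_of_adj hy, (ne_of_mem_erase hb).symm,
      (ne_of_mem_erase hc).symm, ha]
  · have hsplit := card_sdiff_add_card_inter S T
    have hinter : #(T.erase a) ≤ #(S ∩ T) :=
      card_le_card fun v hv => mem_inter.mpr ⟨hTS hv, mem_of_mem_erase hv⟩
    rw [card_erase_of_mem ha] at hinter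
    grind [card_insert_le]

theorem exists_geodeticSet_card_le_iff_of_twins [DecidableEq V] (hG : G.Connected)
    {T : Finset V} (hT : ∀ v ∈ T, ∀ w ∈ T, G.neighborSet v = G.neighborSet w) (hT5 : 5 ≤ #T)
    {a : V} (ha : a ∈ T) (hns : ¬ simplicialVertex G a) (k : ℕ) :
    (∃ S : Finset V, geodeticSet G S ∧ #S ≤ k) ↔
      ∃ S : Finset V, a ∉ S ∧ (∀ u ≠ a, u ∈ G.geodeticClosure S) ∧ #S ≤ k := by
  simp only [simplicialVertex, mem_neighborSet, not_forall, exists_prop] at hns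
  obtain ⟨x, hx, y, hy, hxy, hnxy⟩ := hns
  have compress (S : Finset V) :=
    exists_geodeticSet_card_le_of_erase_subset hG hT hT5 ha hx hy hxy hnxy (S := S)
  constructor
  · rintro ⟨S, hS, hk⟩
    by_cases hTS : T.erase a ⊆ S
    · obtain ⟨C, haC, hC, hCS⟩ := compress S hTS fun u _ => hS u
      exact ⟨C, haC, fun u _ => hC u, hCS.trans hk⟩
    obtain ⟨b, hb, hbS⟩ := not_subset.mp hTS
    let e := twinSwap (hT a ha b (mem_of_mem_erase hb))
    refine ⟨S.image e, ?_, fun u _ => ?_, card_image_le.trans hk⟩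
    · rw [mem_image]
      rintro ⟨s, hs, hsa⟩
      rw [e.injective.eq_iff' (Equiv.swap_apply_right a b)] at hsa
      exact hbS (hsa ▸ hs)
    · rw [coe_image]
      exact e.geodeticSet_image hS u
  · rintro ⟨S, haS, hS, hk⟩
    by_cases hTS : T.erase a ⊆ S
    · obtain ⟨C, -, hC, hCS⟩ :=
        compress S hTS fun u hu => hS u (ne_of_mem_of_not_mem ha hu).symm
      exact ⟨C, hC, hCS.trans hk⟩
    obtain ⟨b, hb, hbS⟩ := not_subset.mp hTS
    refine ⟨S, fun u => ?_, hk⟩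
    rcases eq_or_ne u a with rfl | hua
    · exact mem_geodeticClosure_of_twin (hT u ha b (mem_of_mem_erase hb)) haS hbS
        (hS b (ne_of_mem_erase hb))
    · exact hS u hua

theorem exists_finset_geodeticSet_induce_iff [DecidableEq V] {a b : V}
    (h : G.neighborSet a = G.neighborSet b) (hab : a ≠ b) (k : ℕ) :
    (∃ S : Finset {z | z ≠ a}, geodeticSet (G.induce {z | z ≠ a}) ↑S ∧ #S ≤ k) ↔
      ∃ S : Finset V, a ∉ S ∧ (∀ u ≠ a, u ∈ G.geodeticClosure S) ∧ #S ≤ k := by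
  have hcover (S : Finset {z | z ≠ a}) : geodeticSet (G.induce {z | z ≠ a}) ↑S ↔
      ∀ u ≠ a, u ∈ G.geodeticClosure ↑(S.map (Function.Embedding.subtype _)) := by
    simp [geodeticSet, geodeticClosure, dist_induce_eq_of_twin h hab]
  constructor
  · rintro ⟨S, hS, hk⟩
    exact ⟨S.map (Function.Embedding.subtype _), by simp, (hcover S).mp hS, by simpa using hk⟩
  · rintro ⟨S, haS, hS, hk⟩
    have hSa : ∀ z ∈ S, z ∈ {z | z ≠ a} := fun z hz => ne_of_mem_of_not_mem hz haS
    refine ⟨S.subtype (· ∈ {z | z ≠ a}), (hcover _).mpr ?_, ?_⟩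
    · rwa [subtype_map_of_mem hSa]
    · rwa [card_subtype, filter_true_of_mem hSa]

end SimpleGraph

theorem stmt_11_general {V : Type*}
    (G : SimpleGraph V) (hG : G.Connected)
    (t : Fin 6 → V) (hinj : Function.Injective t)
    (htwin : ∀ i j : Fin 6, G.neighborSet (t i) = G.neighborSet (t j))
    (hns : ∀ i : Fin 6, ¬ simplicialVertex G (t i))
    (k : ℕ) :
    (∃ S : Finset V, geodeticSet G ↑S ∧ S.card ≤ k) ↔
      (∃ S : Finset ↥{z : V | z ≠ t 0},
        geodeticSet (G.induce {z : V | z ≠ t 0}) ↑S ∧ S.card ≤ k) := by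
  classical
  have hT : ∀ v ∈ univ.image t, ∀ w ∈ univ.image t, G.neighborSet v = G.neighborSet w := by
    simp only [mem_image, mem_univ, true_and]
    rintro _ ⟨i, rfl⟩ _ ⟨j, rfl⟩
    exact htwin i j
  rw [SimpleGraph.exists_finset_geodeticSet_induce_iff (htwin 0 1) (hinj.ne (by decide))]
  exact SimpleGraph.exists_geodeticSet_card_le_iff_of_twins hG hT
    (by rw [card_image_of_injective _ hinj]; simp) (mem_image_of_mem t (mem_univ 0)) (hns 0) k

theorem stmt_11 {V : Type*} [Fintype V] [DecidableEq V]
    (G : SimpleGraph V) (hG : G.Connected)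
    (t : Fin 6 → V) (hinj : Function.Injective t)
    (htwin : ∀ i j : Fin 6, G.neighborSet (t i) = G.neighborSet (t j))
    (hnadj : ∀ i j : Fin 6, ¬ G.Adj (t i) (t j))
    (hns : ∀ i : Fin 6, ¬ simplicialVertex G (t i))
    (k : ℕ)
    (hG' : (G.induce {z : V | z ≠ t 0}).Connected) :
    (∃ S : Finset V, geodeticSet G ↑S ∧ S.card ≤ k) ↔
      (∃ S : Finset ↥{z : V | z ≠ t 0},
        geodeticSet (G.induce {z : V | z ≠ t 0}) ↑S ∧ S.card ≤ k) :=
  stmt_11_general G hG t hinj htwin hns k
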